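/- arXiv:0901.4628 — 2 statements merged into one kernel-verified Lean document; each statement's English description precedes it below -/
import Mathlib

section
/- As n → ∞, max_{1 ≤ i ≤ n} |Z_i| / (Σ_{i=1}^n Z_i²)^{1/2} converges to 0 in probability; that is, for every ε > 0, P( max_{1 ≤ i ≤ n} |Z_i| / (Σ_{i=1}^n Z_i²)^{1/2} ≥ ε ) → 0. -/
open MeasureTheory ProbabilityTheory Filter
open scoped Classical

/-! If `max_{i<n} |Z_i| / √(∑_{i<n} Z_i²) ≥ ε`, then either `∑ Z_i² < s_n² / 2` or some
`|Z_i| ≥ (ε / √2) s_n`. The second event has probability at most `2 / ε²` times the Lindeberg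
ratio (Markov's inequality on each tail and a union bound). For the first, truncate `Z_i²` at
`(δ s_n)²`: by Lindeberg the truncated sum still has mean `≥ 3 s_n² / 4`, while by independence
its variance is at most `δ² s_n⁴`, so Chebyshev bounds the probability by `16 δ²`. -/

section

variable {Ω : Type*} [MeasurableSpace Ω] {P : Measure Ω}

lemma measure_le_abs_le_ofReal_setIntegral_sq [IsFiniteMeasure P] {X : Ω → ℝ} (hX : Measurable X)
    (hX2 : Integrable (fun ω => X ω ^ 2) P) {c : ℝ} (hc : 0 < c) :
    P {ω | c ≤ |X ω|} ≤ ENNReal.ofReal (c⁻¹ ^ 2 * ∫ ω in {ω | c ≤ |X ω|}, X ω ^ 2 ∂P) := by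
  have hA : MeasurableSet {ω | c ≤ |X ω|} := measurableSet_le measurable_const hX.abs
  have hmarkov : c ^ 2 * P.real {ω | c ≤ |X ω|} ≤ ∫ ω in {ω | c ≤ |X ω|}, X ω ^ 2 ∂P :=
    setIntegral_ge_of_const_le_real hA (measure_ne_top P _)
      (fun ω (hω : c ≤ |X ω|) => sq_abs (X ω) ▸ pow_le_pow_left₀ hc.le hω 2) hX2.integrableOn
  rw [← ofReal_measureReal (measure_ne_top P _)]
  refine ENNReal.ofReal_le_ofReal ?_
  rw [inv_pow, inv_mul_eq_div, le_div_iff₀ (by positivity)]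
  linarith

lemma measure_exists_le_abs_le_ofReal_sum [IsFiniteMeasure P] {ι : Type*} {Z : ι → Ω → ℝ}
    (hZ : ∀ i, Measurable (Z i)) (hZ2 : ∀ i, Integrable (fun ω => Z i ω ^ 2) P)
    (s : Finset ι) {c : ℝ} (hc : 0 < c) :
    P {ω | ∃ i ∈ s, c ≤ |Z i ω|} ≤
      ENNReal.ofReal (c⁻¹ ^ 2 * ∑ i ∈ s, ∫ ω in {ω | c ≤ |Z i ω|}, Z i ω ^ 2 ∂P) := by
  have htail_nonneg : ∀ i ∈ s, 0 ≤ c⁻¹ ^ 2 * ∫ ω in {ω | c ≤ |Z i ω|}, Z i ω ^ 2 ∂P :=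
    fun i _ => mul_nonneg (by positivity) (setIntegral_nonneg
      (measurableSet_le measurable_const (hZ i).abs) fun ω _ => sq_nonneg _)
  calc P {ω | ∃ i ∈ s, c ≤ |Z i ω|} = P (⋃ i ∈ s, {ω | c ≤ |Z i ω|}) := by
        congr 1; ext ω; simp
    _ ≤ ∑ i ∈ s, P {ω | c ≤ |Z i ω|} := measure_biUnion_finset_le _ _
    _ ≤ ∑ i ∈ s, ENNReal.ofReal (c⁻¹ ^ 2 * ∫ ω in {ω | c ≤ |Z i ω|}, Z i ω ^ 2 ∂P) :=
        Finset.sum_le_sum fun i _ => measure_le_abs_le_ofReal_setIntegral_sq (hZ i) (hZ2 i) hc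
    _ = _ := by rw [← ENNReal.ofReal_sum_of_nonneg htail_nonneg, Finset.mul_sum]

noncomputable def truncSq (c x : ℝ) : ℝ := if c ≤ |x| then 0 else x ^ 2

lemma truncSq_nonneg (c x : ℝ) : 0 ≤ truncSq c x := by
  unfold truncSq; split_ifs <;> positivity

lemma truncSq_le_sq (c x : ℝ) : truncSq c x ≤ x ^ 2 := by
  unfold truncSq; split_ifs <;> [positivity; rfl]

lemma truncSq_le (c x : ℝ) : truncSq c x ≤ c ^ 2 := by
  unfold truncSq
  split_ifs with h
  · positivity
  · rw [← sq_abs x]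
    exact pow_le_pow_left₀ (abs_nonneg x) (not_le.1 h).le 2

lemma sq_truncSq_le (c x : ℝ) : truncSq c x ^ 2 ≤ c ^ 2 * truncSq c x := by
  rw [sq]
  exact mul_le_mul_of_nonneg_right (truncSq_le c x) (truncSq_nonneg c x)

lemma measurable_truncSq (c : ℝ) : Measurable (truncSq c) :=
  Measurable.ite (measurableSet_le measurable_const measurable_abs) measurable_const
    (measurable_id.pow_const 2)

lemma integral_truncSq {X : Ω → ℝ} (hX : Measurable X) (hX2 : Integrable (fun ω => X ω ^ 2) P)
    (c : ℝ) :
    ∫ ω, truncSq c (X ω) ∂P = ∫ ω, X ω ^ 2 ∂P - ∫ ω in {ω | c ≤ |X ω|}, X ω ^ 2 ∂P := by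
  have hA : MeasurableSet {ω | c ≤ |X ω|} := measurableSet_le measurable_const hX.abs
  have hindicator : (fun ω => truncSq c (X ω)) = {ω | c ≤ |X ω|}ᶜ.indicator (fun ω => X ω ^ 2) := by
    ext ω; by_cases h : c ≤ |X ω| <;> simp [truncSq, h]
  rw [hindicator, integral_indicator hA.compl, ← integral_add_compl hA hX2]
  ring

lemma variance_truncSq_le [IsProbabilityMeasure P] {X : Ω → ℝ} (hX : Measurable X)
    (hX2 : Integrable (fun ω => X ω ^ 2) P) (c : ℝ) :
    variance (fun ω => truncSq c (X ω)) P ≤ c ^ 2 * ∫ ω, X ω ^ 2 ∂P := by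
  have hY : Measurable fun ω => truncSq c (X ω) := (measurable_truncSq c).comp hX
  have hYint : Integrable (fun ω => truncSq c (X ω)) P :=
    hX2.mono' hY.aestronglyMeasurable (ae_of_all _ fun ω => by
      rw [Real.norm_of_nonneg (truncSq_nonneg c _)]; exact truncSq_le_sq c _)
  calc variance (fun ω => truncSq c (X ω)) P ≤ ∫ ω, truncSq c (X ω) ^ 2 ∂P :=
        variance_le_expectation_sq hY.aestronglyMeasurable
    _ ≤ ∫ ω, c ^ 2 * truncSq c (X ω) ∂P :=
        integral_mono_of_nonneg (ae_of_all _ fun ω => sq_nonneg _) (hYint.const_mul _)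
          (ae_of_all _ fun ω => sq_truncSq_le c _)
    _ ≤ c ^ 2 * ∫ ω, X ω ^ 2 ∂P := by
        rw [integral_const_mul]
        exact mul_le_mul_of_nonneg_left
          (integral_mono hYint hX2 fun ω => truncSq_le_sq c _) (sq_nonneg c)

lemma measure_sum_sq_lt_half_le [IsProbabilityMeasure P] {ι : Type*} {Z : ι → Ω → ℝ}
    (hZ : ∀ i, Measurable (Z i)) (hindep : iIndepFun Z P)
    (hZ2 : ∀ i, Integrable (fun ω => Z i ω ^ 2) P) (s : Finset ι) (c : ℝ)
    (hv : 0 < ∑ i ∈ s, ∫ ω, Z i ω ^ 2 ∂P)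
    (htail : ∑ i ∈ s, ∫ ω in {ω | c ≤ |Z i ω|}, Z i ω ^ 2 ∂P ≤
      (∑ i ∈ s, ∫ ω, Z i ω ^ 2 ∂P) / 4) :
    P {ω | ∑ i ∈ s, Z i ω ^ 2 < (∑ i ∈ s, ∫ ω, Z i ω ^ 2 ∂P) / 2} ≤
      ENNReal.ofReal (16 * c ^ 2 / ∑ i ∈ s, ∫ ω, Z i ω ^ 2 ∂P) := by
  set v := ∑ i ∈ s, ∫ ω, Z i ω ^ 2 ∂P
  set T : Ω → ℝ := ∑ i ∈ s, fun ω => truncSq c (Z i ω) with hT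
  have hYmem : ∀ i, MemLp (fun ω => truncSq c (Z i ω)) 2 P := fun i =>
    MemLp.of_bound ((measurable_truncSq c).comp (hZ i)).aestronglyMeasurable (c ^ 2)
      (ae_of_all _ fun ω => by
        rw [Real.norm_of_nonneg (truncSq_nonneg c _)]; exact truncSq_le c _)
  have hvarT : variance T P ≤ c ^ 2 * v := by
    rw [hT, IndepFun.variance_sum (fun i _ => hYmem i) fun i _ j _ hij =>
      (hindep.indepFun hij).comp (measurable_truncSq c) (measurable_truncSq c), Finset.mul_sum]
    exact Finset.sum_le_sum fun i _ => variance_truncSq_le (hZ i) (hZ2 i) c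
  have hmeanT : 3 / 4 * v ≤ P[T] := by
    rw [hT]
    simp only [Finset.sum_apply]
    rw [integral_finsetSum _ fun i _ => (hYmem i).integrable one_le_two]
    simp only [integral_truncSq (hZ _) (hZ2 _), Finset.sum_sub_distrib]
    linarith
  have hsub : {ω | ∑ i ∈ s, Z i ω ^ 2 < v / 2} ⊆ {ω | v / 4 ≤ |T ω - P[T]|} := by
    intro ω (hω : ∑ i ∈ s, Z i ω ^ 2 < v / 2)
    have hTω : T ω ≤ ∑ i ∈ s, Z i ω ^ 2 := by
      rw [hT, Finset.sum_apply]
      exact Finset.sum_le_sum fun i _ => truncSq_le_sq c _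
    show v / 4 ≤ |T ω - P[T]|
    rw [abs_sub_comm]
    exact (le_abs_self _).trans' (by linarith)
  calc P {ω | ∑ i ∈ s, Z i ω ^ 2 < v / 2} ≤ P {ω | v / 4 ≤ |T ω - P[T]|} := measure_mono hsub
    _ ≤ ENNReal.ofReal (variance T P / (v / 4) ^ 2) :=
        meas_ge_le_variance_div_sq (memLp_finsetSum' _ fun i _ => hYmem i) (by positivity)
    _ ≤ ENNReal.ofReal (16 * c ^ 2 / v) := by
        refine ENNReal.ofReal_le_ofReal ?_
        rw [div_le_div_iff₀ (by positivity) hv]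
        nlinarith

end

lemma div_sqrt_two_mul_sqrt_le_of_le_div_sqrt {ε a S v : ℝ} (hε : 0 < ε) (h : ε ≤ a / √S)
    (hS : v / 2 ≤ S) : ε / √2 * √v ≤ a := by
  rcases (Real.sqrt_nonneg S).eq_or_lt with hS0 | hSpos
  · rw [← hS0, div_zero] at h
    linarith
  calc ε / √2 * √v = ε * √(v / 2) := by rw [Real.sqrt_div' v zero_le_two]; ring
    _ ≤ ε * √S := by gcongr
    _ ≤ a := (le_div_iff₀ hSpos).1 h

section Lindeberg

variable {Ω : Type*} [MeasurableSpace Ω] {P : Measure Ω} {Z : ℕ → Ω → ℝ} {σ2 : ℕ → ℝ}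

noncomputable def lindebergRatio (P : Measure Ω) (Z : ℕ → Ω → ℝ) (σ2 : ℕ → ℝ) (δ : ℝ)
    (n : ℕ) : ℝ :=
  (∑ i ∈ Finset.range n, σ2 i)⁻¹ *
    ∑ i ∈ Finset.range n,
      ∫ ω in {ω | δ * √(∑ j ∈ Finset.range n, σ2 j) ≤ |Z i ω|}, Z i ω ^ 2 ∂P

lemma sum_range_pos (hpos : ∀ i, 0 < σ2 i) {n : ℕ} (hn : 1 ≤ n) :
    0 < ∑ i ∈ Finset.range n, σ2 i :=
  Finset.sum_pos (fun i _ => hpos i) (Finset.nonempty_range_iff.2 (by omega))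

lemma tendsto_measure_exists_le_abs [IsFiniteMeasure P] (hZ : ∀ i, Measurable (Z i))
    (hZ2 : ∀ i, Integrable (fun ω => Z i ω ^ 2) P) (hpos : ∀ i, 0 < σ2 i) {δ : ℝ} (hδ : 0 < δ)
    (hL : Tendsto (lindebergRatio P Z σ2 δ) atTop (nhds 0)) :
    Tendsto (fun n => P {ω | ∃ i ∈ Finset.range n,
      δ * √(∑ j ∈ Finset.range n, σ2 j) ≤ |Z i ω|}) atTop (nhds 0) := by
  have hbound : ∀ n ≥ 1, P {ω | ∃ i ∈ Finset.range n,
      δ * √(∑ j ∈ Finset.range n, σ2 j) ≤ |Z i ω|} ≤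
        ENNReal.ofReal (δ⁻¹ ^ 2 * lindebergRatio P Z σ2 δ n) := by
    intro n hn
    have hs := sum_range_pos hpos hn
    convert measure_exists_le_abs_le_ofReal_sum hZ hZ2 (Finset.range n)
      (mul_pos hδ (Real.sqrt_pos.2 hs)) using 2
    rw [lindebergRatio, ← mul_assoc, mul_inv, mul_pow, inv_pow (√_), Real.sq_sqrt hs.le]
  have hlim : Tendsto (fun n => ENNReal.ofReal (δ⁻¹ ^ 2 * lindebergRatio P Z σ2 δ n)) atTop
      (nhds 0) := by
    simpa only [mul_zero, ENNReal.ofReal_zero] using ENNReal.tendsto_ofReal (hL.const_mul (δ⁻¹ ^ 2))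
  exact tendsto_of_tendsto_of_tendsto_of_le_of_le' tendsto_const_nhds hlim
    (Eventually.of_forall fun _ => zero_le) (eventually_atTop.2 ⟨1, hbound⟩)

lemma tendsto_measure_sum_sq_lt_half [IsProbabilityMeasure P] (hZ : ∀ i, Measurable (Z i))
    (hindep : iIndepFun Z P) (hZ2 : ∀ i, Integrable (fun ω => Z i ω ^ 2) P)
    (hvar : ∀ i, ∫ ω, Z i ω ^ 2 ∂P = σ2 i) (hpos : ∀ i, 0 < σ2 i)
    (hL : ∀ δ > 0, Tendsto (lindebergRatio P Z σ2 δ) atTop (nhds 0)) :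
    Tendsto (fun n => P {ω | ∑ j ∈ Finset.range n, Z j ω ^ 2 <
      (∑ j ∈ Finset.range n, σ2 j) / 2}) atTop (nhds 0) := by
  rw [ENNReal.tendsto_nhds_zero]
  intro η hη
  obtain ⟨r, -, hr0, hrη⟩ := ENNReal.lt_iff_exists_real_btwn.1 hη
  have hr : 0 < r := ENNReal.ofReal_pos.1 hr0
  have hδ : 0 < √r / 4 := by positivity
  filter_upwards [(hL _ hδ).eventually (eventually_le_nhds (by norm_num : (0 : ℝ) < 1 / 4)),
    eventually_ge_atTop 1] with n hratio hn
  have hs := sum_range_pos hpos hn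
  have hv : ∑ i ∈ Finset.range n, ∫ ω, Z i ω ^ 2 ∂P = ∑ i ∈ Finset.range n, σ2 i :=
    Finset.sum_congr rfl fun i _ => hvar i
  have htail := (inv_mul_le_iff₀ hs).1 hratio
  have := measure_sum_sq_lt_half_le hZ hindep hZ2 (Finset.range n)
    (√r / 4 * √(∑ j ∈ Finset.range n, σ2 j)) (hv ▸ hs) (by rw [hv]; linarith)
  rw [hv] at this
  refine this.trans ((ENNReal.ofReal_le_ofReal (le_of_eq ?_)).trans hrη.le)
  rw [mul_pow, div_pow, Real.sq_sqrt hr.le, Real.sq_sqrt hs.le]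
  field_simp
  ring

end Lindeberg

theorem max_abs_over_self_norm_negligible_general
    {Ω : Type*} [MeasurableSpace Ω] (P : Measure Ω) [IsProbabilityMeasure P]
    (Z : ℕ → Ω → ℝ) (σ2 : ℕ → ℝ)
    (hmeas : ∀ i, Measurable (Z i))
    (hindep : iIndepFun Z P)
    (hL2 : ∀ i, MemLp (Z i) 2 P)
    (hvar : ∀ i, ∫ ω, (Z i ω) ^ 2 ∂P = σ2 i)
    (hpos : ∀ i, 0 < σ2 i)
    (hLind : ∀ ε > (0 : ℝ), Tendsto (fun n =>
      (∑ i ∈ Finset.range n, σ2 i)⁻¹ *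
        ∑ i ∈ Finset.range n,
          ∫ ω in {ω | ε * Real.sqrt (∑ j ∈ Finset.range n, σ2 j) ≤ |Z i ω|}, (Z i ω) ^ 2 ∂P)
      atTop (nhds 0)) :
    ∀ ε > (0 : ℝ), Tendsto (fun n =>
      P {ω | ∃ i ∈ Finset.range n,
        ε ≤ |Z i ω| / Real.sqrt (∑ j ∈ Finset.range n, (Z j ω) ^ 2)})
      atTop (nhds 0) := by
  intro ε hε
  have hZ2 : ∀ i, Integrable (fun ω => Z i ω ^ 2) P := fun i => (hL2 i).integrable_sq
  have hsub : ∀ n, {ω | ∃ i ∈ Finset.range n,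
      ε ≤ |Z i ω| / √(∑ j ∈ Finset.range n, Z j ω ^ 2)} ⊆
      {ω | ∑ j ∈ Finset.range n, Z j ω ^ 2 < (∑ j ∈ Finset.range n, σ2 j) / 2} ∪
      {ω | ∃ i ∈ Finset.range n, ε / √2 * √(∑ j ∈ Finset.range n, σ2 j) ≤ |Z i ω|} := by
    rintro n ω ⟨i, hi, hiω⟩
    by_cases hS : ∑ j ∈ Finset.range n, Z j ω ^ 2 < (∑ j ∈ Finset.range n, σ2 j) / 2
    · exact Or.inl hS
    · exact Or.inr ⟨i, hi, div_sqrt_two_mul_sqrt_le_of_le_div_sqrt hε hiω (not_lt.1 hS)⟩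
  have hsmall := tendsto_measure_sum_sq_lt_half hmeas hindep hZ2 hvar hpos hLind
  have hlarge := tendsto_measure_exists_le_abs hmeas hZ2 hpos (by positivity)
    (hLind (ε / √2) (by positivity))
  refine tendsto_of_tendsto_of_tendsto_of_le_of_le tendsto_const_nhds
    (by simpa using hsmall.add hlarge) (fun _ => zero_le)
    fun n => (measure_mono (hsub n)).trans (measure_union_le _ _)

/-- Under Lindeberg's condition, `max_{1≤i≤n} |Z_i| / (∑_{i=1}^n Z_i²)^{1/2}`
converges to 0 in probability. -/
theorem max_abs_over_self_norm_negligible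
    {Ω : Type*} [MeasurableSpace Ω] (P : Measure Ω) [IsProbabilityMeasure P]
    (Z : ℕ → Ω → ℝ) (σ2 : ℕ → ℝ)
    (hmeas : ∀ i, Measurable (Z i))
    (hindep : iIndepFun Z P)
    (hL2 : ∀ i, MemLp (Z i) 2 P)
    (hmean : ∀ i, ∫ ω, Z i ω ∂P = 0)
    (hvar : ∀ i, ∫ ω, (Z i ω) ^ 2 ∂P = σ2 i)
    (hpos : ∀ i, 0 < σ2 i)
    (hLind : ∀ ε > (0 : ℝ), Tendsto (fun n =>
      (∑ i ∈ Finset.range n, σ2 i)⁻¹ *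
        ∑ i ∈ Finset.range n,
          ∫ ω in {ω | ε * Real.sqrt (∑ j ∈ Finset.range n, σ2 j) ≤ |Z i ω|}, (Z i ω) ^ 2 ∂P)
      atTop (nhds 0)) :
    ∀ ε > (0 : ℝ), Tendsto (fun n =>
      P {ω | ∃ i ∈ Finset.range n,
        ε ≤ |Z i ω| / Real.sqrt (∑ j ∈ Finset.range n, (Z j ω) ^ 2)})
      atTop (nhds 0) :=
  max_abs_over_self_norm_negligible_general P Z σ2 hmeas hindep hL2 hvar hpos hLind
end

section
/- Suppose that (i) max_{1 ≤ i ≤ n} (Z_i − μ)² / Σ_{i=1}^n (Z_i − μ)² converges to 0 in probability as n → ∞, and (ii) the self-normalized sums V_n := Σ_{i=1}^n (Z_i − μ) / (Σ_{i=1}^n (Z_i − μ)²)^{1/2} are bounded in probability, i.e., for every δ > 0 there exists C > 0 such that P(|V_n| > C) ≤ δ for all n. Then max_{1 ≤ i ≤ n} (Z_i − Z̄_n)² / Σ_{i=1}^n (Z_i − Z̄_n)² converges to 0 in probability as n → ∞, where Z̄_n := n^{−1} Σ_{i=1}^n Z_i. -/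
/-!
Write `S = ∑ (Z_i - μ)`, `T = ∑ (Z_i - μ)²` and `n` for the sample size. Centering at the sample
mean moves each term by `S / n` and lowers the sum of squares to `T - S² / n`. Once `|S| / √T ≤ C`,
both effects are controlled for `n ≥ 2 C²`: the new denominator is at least `T / 2` and
`(S / n)² ≤ C² T / n`, so the centered ratio is at most `4 (Z_i - μ)² / T + 4 C² / n`. Hence outside
the event `{|V_n| > C}`, which has probability at most `δ`, a large centered ratio forces a large
uncentered one.
-/

open MeasureTheory Filter Finset
open scoped ENNReal Topology

section CenteredSums

variable {ι : Type*} (s : Finset ι) (x : ι → ℝ) (μ : ℝ)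

theorem sum_sq_sub_mean_eq :
    ∑ j ∈ s, (x j - (∑ l ∈ s, x l) / #s) ^ 2
      = ∑ j ∈ s, (x j - μ) ^ 2 - (∑ j ∈ s, (x j - μ)) ^ 2 / #s := by
  rcases s.eq_empty_or_nonempty with rfl | hs
  · simp
  have hn : (#s : ℝ) ≠ 0 := by exact_mod_cast hs.card_pos.ne'
  have hmean : (∑ l ∈ s, x l) / #s = μ + (∑ j ∈ s, (x j - μ)) / #s := by
    rw [sum_sub_distrib, sum_const, nsmul_eq_mul]
    field_simp
    ring
  have hterm : ∀ j, (x j - (∑ l ∈ s, x l) / #s) ^ 2 = (x j - μ) ^ 2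
      - 2 * ((∑ j ∈ s, (x j - μ)) / #s) * (x j - μ) + ((∑ j ∈ s, (x j - μ)) / #s) ^ 2 := by
    intro j
    rw [hmean]
    ring
  simp only [hterm, sum_add_distrib, sum_sub_distrib, ← mul_sum, sum_const, nsmul_eq_mul]
  field_simp
  ring

theorem sq_sum_sub_le_of_abs_div_sqrt_le {C : ℝ}
    (hC : |(∑ j ∈ s, (x j - μ)) / Real.sqrt (∑ j ∈ s, (x j - μ) ^ 2)| ≤ C) :
    (∑ j ∈ s, (x j - μ)) ^ 2 ≤ C ^ 2 * ∑ j ∈ s, (x j - μ) ^ 2 := by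
  set S := ∑ j ∈ s, (x j - μ)
  set T := ∑ j ∈ s, (x j - μ) ^ 2
  have hT : 0 ≤ T := sum_nonneg fun j _ => sq_nonneg _
  rcases hT.eq_or_lt with hT0 | hTpos
  -- For `T = 0` the hypothesis says nothing (`S / 0 = 0`); Cauchy–Schwarz gives `S = 0` instead.
  · have hCS : S ^ 2 ≤ #s * T := sq_sum_le_card_mul_sum_sq
    rw [← hT0] at hCS ⊢
    simpa using hCS
  · have hsq : (|S / Real.sqrt T|) ^ 2 ≤ C ^ 2 := pow_le_pow_left₀ (abs_nonneg _) hC 2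
    rw [sq_abs, div_pow, Real.sq_sqrt hT, div_le_iff₀ hTpos] at hsq
    exact hsq

theorem sq_sub_mean_div_le {C : ℝ} (hn : 2 * C ^ 2 ≤ #s)
    (hS : (∑ j ∈ s, (x j - μ)) ^ 2 ≤ C ^ 2 * ∑ j ∈ s, (x j - μ) ^ 2) {i : ι} (hi : i ∈ s) :
    (x i - (∑ l ∈ s, x l) / #s) ^ 2 / ∑ j ∈ s, (x j - (∑ l ∈ s, x l) / #s) ^ 2
      ≤ 4 * ((x i - μ) ^ 2 / ∑ j ∈ s, (x j - μ) ^ 2) + 4 * C ^ 2 / #s := by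
  have hn1 : (1 : ℝ) ≤ #s := by exact_mod_cast card_pos.mpr ⟨i, hi⟩
  have hdev : x i - (∑ l ∈ s, x l) / #s = (x i - μ) - (∑ j ∈ s, (x j - μ)) / #s := by
    rw [sum_sub_distrib, sum_const, nsmul_eq_mul]
    field_simp
    ring
  rw [sum_sq_sub_mean_eq s x μ, hdev]
  set S := ∑ j ∈ s, (x j - μ)
  set T := ∑ j ∈ s, (x j - μ) ^ 2
  set n : ℝ := (#s : ℝ)
  have hT : 0 ≤ T := sum_nonneg fun j _ => sq_nonneg _
  have hSn : S ^ 2 / n ≤ C ^ 2 * T / n := by gcongr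
  have hCn : C ^ 2 * T / n ≤ T / 2 := by
    rw [div_le_iff₀ (by positivity)]
    nlinarith
  have hmean_sq : (S / n) ^ 2 ≤ C ^ 2 * T / n := by
    calc (S / n) ^ 2 = S ^ 2 / n / n := by ring
      _ ≤ S ^ 2 / n := div_le_self (by positivity) hn1
      _ ≤ C ^ 2 * T / n := hSn
  have hnum : ((x i - μ) - S / n) ^ 2 ≤ 2 * (x i - μ) ^ 2 + 2 * (C ^ 2 * T / n) := by
    nlinarith [sq_nonneg ((x i - μ) + S / n)]
  have hRHS : 0 ≤ 4 * ((x i - μ) ^ 2 / T) + 4 * C ^ 2 / n := by positivity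
  rcases hT.eq_or_lt with hT0 | hTpos
  · have hD : T - S ^ 2 / n = 0 := by
      rw [← hT0] at hSn hCn ⊢
      have : 0 ≤ S ^ 2 / n := by positivity
      linarith
    rwa [hD, div_zero]
  · calc ((x i - μ) - S / n) ^ 2 / (T - S ^ 2 / n)
        ≤ (2 * (x i - μ) ^ 2 + 2 * (C ^ 2 * T / n)) / (T / 2) := by
          gcongr
          linarith
      _ = 4 * ((x i - μ) ^ 2 / T) + 4 * C ^ 2 / n := by
          field_simp
          ring

end CenteredSums

theorem tendsto_measure_zero_of_subset_union {Ω α : Type*} [MeasurableSpace Ω] {P : Measure Ω}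
    {l : Filter α} {A B : α → Set Ω} (hB : Tendsto (fun a => P (B a)) l (𝓝 0))
    (hA : ∀ δ > 0, ∃ E : α → Set Ω, (∀ a, P (E a) ≤ δ) ∧ ∀ᶠ a in l, A a ⊆ B a ∪ E a) :
    Tendsto (fun a => P (A a)) l (𝓝 0) := by
  refine ENNReal.tendsto_nhds_zero.2 fun δ hδ => ?_
  obtain ⟨E, hE, hAE⟩ := hA (δ / 2) (ENNReal.half_pos hδ.ne')
  filter_upwards [hAE, ENNReal.tendsto_nhds_zero.1 hB (δ / 2) (ENNReal.half_pos hδ.ne')]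
    with a hsub hBa
  calc P (A a) ≤ P (B a) + P (E a) := (measure_mono hsub).trans (measure_union_le _ _)
    _ ≤ δ / 2 + δ / 2 := add_le_add hBa (hE a)
    _ = δ := ENNReal.add_halves δ

theorem max_centered_ratio_of_max_mu_ratio_general
    {Ω : Type*} [MeasurableSpace Ω] (P : Measure Ω)
    (Z : ℕ → Ω → ℝ) (μ : ℝ)
    (h1 : ∀ ε > (0 : ℝ), Tendsto (fun n =>
      P {ω | ∃ i ∈ Finset.range n,
        ε ≤ (Z i ω - μ) ^ 2 / ∑ j ∈ Finset.range n, (Z j ω - μ) ^ 2})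
      atTop (nhds 0))
    (h2 : ∀ δ : ℝ≥0∞, 0 < δ → ∃ C : ℝ, 0 < C ∧ ∀ n : ℕ,
      P {ω | C < |(∑ i ∈ Finset.range n, (Z i ω - μ)) /
        Real.sqrt (∑ i ∈ Finset.range n, (Z i ω - μ) ^ 2)|} ≤ δ) :
    ∀ ε > (0 : ℝ), Tendsto (fun n =>
      P {ω | ∃ i ∈ Finset.range n,
        ε ≤ (Z i ω - (∑ j ∈ Finset.range n, Z j ω) / n) ^ 2 /
          ∑ j ∈ Finset.range n, (Z j ω - (∑ l ∈ Finset.range n, Z l ω) / n) ^ 2})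
      atTop (nhds 0) := by
  intro ε hε
  refine tendsto_measure_zero_of_subset_union (h1 (ε / 8) (by positivity)) fun δ hδ => ?_
  obtain ⟨C, -, hCδ⟩ := h2 δ hδ
  refine ⟨_, hCδ, ?_⟩
  filter_upwards [eventually_ge_atTop ⌈2 * C ^ 2⌉₊,
    (tendsto_const_div_atTop_nhds_zero_nat (4 * C ^ 2)).eventually (gt_mem_nhds (half_pos hε))]
    with n hn hCn
  rintro ω ⟨i, hi, hεi⟩
  rw [Set.mem_union, or_iff_not_imp_right]
  intro hV
  rw [Set.mem_ofPred_eq, not_lt] at hV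
  have hratio := sq_sub_mean_div_le (range n) (fun j => Z j ω) μ
    (by simpa using Nat.ceil_le.mp hn) (sq_sum_sub_le_of_abs_div_sqrt_le _ _ _ hV) hi
  simp only [card_range] at hratio
  refine ⟨i, hi, ?_⟩
  linarith

/-- If `max_{1≤i≤n} (Z_i − μ)² / ∑ (Z_i − μ)²` tends to 0 in probability and the
self-normalized sums `V_n = ∑ (Z_i − μ) / (∑ (Z_i − μ)²)^{1/2}` are bounded in
probability, then `max_{1≤i≤n} (Z_i − Z̄_n)² / ∑ (Z_i − Z̄_n)²` tends to 0 in
probability. -/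
theorem max_centered_ratio_of_max_mu_ratio
    {Ω : Type*} [MeasurableSpace Ω] (P : Measure Ω) [IsProbabilityMeasure P]
    (Z : ℕ → Ω → ℝ) (μ : ℝ)
    (hmeas : ∀ i, Measurable (Z i))
    (h1 : ∀ ε > (0 : ℝ), Tendsto (fun n =>
      P {ω | ∃ i ∈ Finset.range n,
        ε ≤ (Z i ω - μ) ^ 2 / ∑ j ∈ Finset.range n, (Z j ω - μ) ^ 2})
      atTop (nhds 0))
    (h2 : ∀ δ : ℝ≥0∞, 0 < δ → ∃ C : ℝ, 0 < C ∧ ∀ n : ℕ,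
      P {ω | C < |(∑ i ∈ Finset.range n, (Z i ω - μ)) /
        Real.sqrt (∑ i ∈ Finset.range n, (Z i ω - μ) ^ 2)|} ≤ δ) :
    ∀ ε > (0 : ℝ), Tendsto (fun n =>
      P {ω | ∃ i ∈ Finset.range n,
        ε ≤ (Z i ω - (∑ j ∈ Finset.range n, Z j ω) / n) ^ 2 /
          ∑ j ∈ Finset.range n, (Z j ω - (∑ l ∈ Finset.range n, Z l ω) / n) ^ 2})
      atTop (nhds 0) :=
  max_centered_ratio_of_max_mu_ratio_general P Z μ h1 h2
end
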